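/- arXiv:1403.0735 — 3 statements merged into one kernel-verified Lean document; each statement's English description precedes it below -/
import Mathlib

section
/- Let X be an n×p matrix with nonzero columns, let mc(X) = max_{i≠j} |⟨X_{·,i}, X_{·,j}⟩| / (‖X_{·,i}‖_2 ‖X_{·,j}‖_2) be the mutual coherence and let φ̄(1) = min_i ‖X_{·,i}‖_2 / ‖X‖ with ‖X‖ = max_i ‖X_{·,i}‖_2. Then for every s ≥ 1, φ̃(s)² ≥ φ̄(1)² − s · mc(X), where φ̃(s) = inf{ ‖Xβ‖_2 / (‖X‖‖β‖_2) : β ≠ 0, |S_β| ≤ s }. -/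
/-- The maximal Euclidean column norm `‖X‖ = max_j ‖X_{·,j}‖₂`. -/
noncomputable def normX {n p : ℕ} (X : Matrix (Fin n) (Fin p) ℝ) : ℝ :=
  ⨆ j, Real.sqrt (∑ i, (X i j) ^ 2)

/-- Euclidean norm of a vector. -/
noncomputable def l2 {n : ℕ} (v : Fin n → ℝ) : ℝ := Real.sqrt (∑ i, (v i) ^ 2)

/-- ℓ¹-norm of a vector. -/
noncomputable def l1 {p : ℕ} (v : Fin p → ℝ) : ℝ := ∑ i, |v i|

/-- Uniform compatibility number in vectors of dimension `s`:
`φ̄(s) = inf{ ‖Xβ‖₂|S_β|^{1/2}/(‖X‖‖β‖₁) : β ≠ 0, |S_β| ≤ s }`. -/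
noncomputable def phiBar {n p : ℕ} (X : Matrix (Fin n) (Fin p) ℝ) (s : ℕ) : ℝ :=
  sInf {x | ∃ β : Fin p → ℝ, β ≠ 0 ∧ (Function.support β).ncard ≤ s ∧
    x = l2 (X.mulVec β) * Real.sqrt ((Function.support β).ncard) / (normX X * l1 β)}

/-- Smallest scaled sparse singular value of dimension `s`:
`φ̃(s) = inf{ ‖Xβ‖₂/(‖X‖‖β‖₂) : β ≠ 0, |S_β| ≤ s }`. -/
noncomputable def phiTilde {n p : ℕ} (X : Matrix (Fin n) (Fin p) ℝ) (s : ℕ) : ℝ :=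
  sInf {x | ∃ β : Fin p → ℝ, β ≠ 0 ∧ (Function.support β).ncard ≤ s ∧
    x = l2 (X.mulVec β) / (normX X * l2 β)}

/-- The mutual coherence number `mc(X)`: the maximal correlation between distinct columns. -/
noncomputable def mutualCoherence {n p : ℕ} (X : Matrix (Fin n) (Fin p) ℝ) : ℝ :=
  sSup {x | ∃ i j : Fin p, i ≠ j ∧
    x = |∑ k, X k i * X k j| /
      (Real.sqrt (∑ k, (X k i) ^ 2) * Real.sqrt (∑ k, (X k j) ^ 2))}

open Finset in
/-- `φ̃(s)² ≥ φ̄(1)² − s·mc(X)` with `φ̄(1) = min_i ‖X_{·,i}‖₂/‖X‖`. -/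
theorem phiTilde_sq_ge {n p : ℕ} (X : Matrix (Fin n) (Fin p) ℝ)
    (hp : 0 < p) (hcols : ∀ j, 0 < Real.sqrt (∑ k, (X k j) ^ 2))
    (s : ℕ) (hs : 1 ≤ s) :
    ((⨅ i, Real.sqrt (∑ k, (X k i) ^ 2)) / normX X) ^ 2 - s * mutualCoherence X ≤
      phiTilde X s ^ 2 := by
  classical
  haveI : Nonempty (Fin p) := ⟨⟨0, hp⟩⟩
  set c : Fin p → ℝ := fun j => Real.sqrt (∑ k, (X k j) ^ 2) with hc
  set M : ℝ := normX X with hM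
  set m : ℝ := ⨅ i, c i with hm
  set mc : ℝ := mutualCoherence X with hmc
  -- basic facts about M and m
  have hbdd : BddAbove (Set.range c) := Set.Finite.bddAbove (Set.finite_range c)
  have hcM : ∀ j, c j ≤ M := fun j => le_ciSup hbdd j
  have hmc' : ∀ j, m ≤ c j := fun j => ciInf_le (Set.Finite.bddBelow (Set.finite_range c)) j
  obtain ⟨i0, hi0⟩ := Finite.exists_min c
  have hmpos : 0 < m := lt_of_lt_of_le (hcols i0) (le_ciInf hi0)
  have hMpos : 0 < M := lt_of_lt_of_le (hcols i0) (hcM i0)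
  -- mutual coherence bounds
  have hmcset : ∀ x ∈ {x : ℝ | ∃ i j : Fin p, i ≠ j ∧
      x = |∑ k, X k i * X k j| / (c i * c j)}, x ≤ 1 := by
    rintro x ⟨i, j, hij, rfl⟩
    rw [div_le_one (mul_pos (hcols i) (hcols j))]
    have h := Finset.sum_mul_sq_le_sq_mul_sq univ (fun k => X k i) (fun k => X k j)
    have habs : |∑ k, X k i * X k j| ^ 2 ≤ (c i * c j) ^ 2 := by
      rw [sq_abs, mul_pow, hc]
      simpa [Real.sq_sqrt (Finset.sum_nonneg fun k _ => sq_nonneg (X k i)),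
        Real.sq_sqrt (Finset.sum_nonneg fun k _ => sq_nonneg (X k j))] using h
    nlinarith [abs_nonneg (∑ k, X k i * X k j), mul_nonneg (hcols i).le (hcols j).le]
  have hmcle : ∀ i j : Fin p, i ≠ j → |∑ k, X k i * X k j| ≤ mc * (c i * c j) := by
    intro i j hij
    have hmem : |∑ k, X k i * X k j| / (c i * c j) ∈ {x : ℝ | ∃ i j : Fin p, i ≠ j ∧
        x = |∑ k, X k i * X k j| / (c i * c j)} := ⟨i, j, hij, rfl⟩
    have hle : |∑ k, X k i * X k j| / (c i * c j) ≤ mc :=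
      le_csSup ⟨1, hmcset⟩ hmem
    have := mul_le_mul_of_nonneg_right hle (mul_nonneg (hcols i).le (hcols j).le)
    rwa [div_mul_cancel₀ _ (mul_pos (hcols i) (hcols j)).ne'] at this
  have hmcnn : 0 ≤ mc := by
    by_cases hex : ∃ i j : Fin p, i ≠ j
    · obtain ⟨i, j, hij⟩ := hex
      refine le_trans ?_ (le_csSup ⟨1, hmcset⟩ ⟨i, j, hij, rfl⟩)
      positivity
    · have : {x : ℝ | ∃ i j : Fin p, i ≠ j ∧
          x = |∑ k, X k i * X k j| / (c i * c j)} = ∅ := by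
        ext x; simp only [Set.mem_setOf_eq, Set.mem_empty_iff_false, iff_false]
        rintro ⟨i, j, hij, -⟩; exact hex ⟨i, j, hij⟩
      rw [hmc, mutualCoherence, show {x : ℝ | ∃ i j : Fin p, i ≠ j ∧
        x = |∑ k, X k i * X k j| / (Real.sqrt (∑ k, (X k i) ^ 2) * Real.sqrt (∑ k, (X k j) ^ 2))} = ∅ from this, Real.sSup_empty]
  -- the key inequality for each admissible β
  have key : ∀ β : Fin p → ℝ, β ≠ 0 → (Function.support β).ncard ≤ s →
      (m / M) ^ 2 - s * mc ≤ (l2 (X.mulVec β) / (M * l2 β)) ^ 2 := by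
    intro β hβ hsupp
    have hl2βpos : 0 < ∑ j, (β j) ^ 2 := by
      obtain ⟨j, hj⟩ := Function.ne_iff.mp hβ
      exact Finset.sum_pos' (fun k _ => sq_nonneg _) ⟨j, Finset.mem_univ j, (sq_nonneg _).lt_of_ne (by simpa using (pow_ne_zero 2 hj).symm)⟩
    have hl2β : 0 < l2 β := Real.sqrt_pos.mpr hl2βpos
    have hl2βsq : l2 β ^ 2 = ∑ j, (β j) ^ 2 := Real.sq_sqrt hl2βpos.le
    -- the support as a finset
    set T : Finset (Fin p) := univ.filter (fun j => β j ≠ 0) with hT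
    have hsuppT : Function.support β = ↑T := by
      ext j; simp [hT, Function.mem_support]
    have hTcard : T.card ≤ s := by
      rw [hsuppT, Set.ncard_coe_finset] at hsupp; exact hsupp
    -- l1 bound
    have hl1sq : l1 β ^ 2 ≤ (s : ℝ) * ∑ j, (β j) ^ 2 := by
      have h1 : l1 β = ∑ j ∈ T, |β j| := by
        rw [l1]
        refine (Finset.sum_subset (Finset.subset_univ T) ?_).symm
        intro j _ hj
        simp only [hT, Finset.mem_filter, Finset.mem_univ, true_and, not_not] at hj
        simp [hj]
      have h2 := Finset.sum_mul_sq_le_sq_mul_sq T (fun _ => (1:ℝ)) (fun j => |β j|)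
      simp only [one_pow, one_mul, Finset.sum_const, nsmul_eq_mul, sq_abs, mul_one] at h2
      calc l1 β ^ 2 = (∑ j ∈ T, |β j|) ^ 2 := by rw [h1]
        _ ≤ (T.card : ℝ) * ∑ j ∈ T, (β j) ^ 2 := h2
        _ ≤ (s : ℝ) * ∑ j, (β j) ^ 2 := by
            apply mul_le_mul (by exact_mod_cast hTcard)
              (Finset.sum_le_sum_of_subset_of_nonneg (Finset.subset_univ T)
                (fun j _ _ => sq_nonneg _))
              (Finset.sum_nonneg fun j _ => sq_nonneg _) (Nat.cast_nonneg s)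
    -- expansion of ‖Xβ‖²
    have hexp : l2 (X.mulVec β) ^ 2 = ∑ j, ∑ k, β j * β k * (∑ i, X i j * X i k) := by
      rw [l2, Real.sq_sqrt (Finset.sum_nonneg fun i _ => sq_nonneg _)]
      calc ∑ i, (X.mulVec β i) ^ 2
          = ∑ i, ∑ j, ∑ k, β j * β k * (X i j * X i k) := by
            refine Finset.sum_congr rfl fun i _ => ?_
            rw [Matrix.mulVec, dotProduct, pow_two, Finset.sum_mul_sum]
            exact Finset.sum_congr rfl fun j _ => Finset.sum_congr rfl fun k _ => by ring
        _ = ∑ j, ∑ k, β j * β k * (∑ i, X i j * X i k) := by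
            rw [Finset.sum_comm]
            refine Finset.sum_congr rfl fun j _ => ?_
            rw [Finset.sum_comm]
            exact Finset.sum_congr rfl fun k _ => by rw [Finset.mul_sum]
    -- split diagonal and off-diagonal
    have hsplit : l2 (X.mulVec β) ^ 2 = (∑ j, β j ^ 2 * (c j) ^ 2)
        + ∑ j, ∑ k ∈ univ.erase j, β j * β k * (∑ i, X i j * X i k) := by
      rw [hexp, ← Finset.sum_add_distrib]
      refine Finset.sum_congr rfl fun j _ => ?_
      rw [← Finset.add_sum_erase _ _ (Finset.mem_univ j)]
      congr 1
      rw [hc, Real.sq_sqrt (Finset.sum_nonneg fun k _ => sq_nonneg _)]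
      ring_nf
    -- diagonal lower bound
    have hdiag : m ^ 2 * ∑ j, (β j) ^ 2 ≤ ∑ j, β j ^ 2 * (c j) ^ 2 := by
      rw [Finset.mul_sum]
      refine Finset.sum_le_sum fun j _ => ?_
      have := pow_le_pow_left₀ hmpos.le (hmc' j) 2
      nlinarith [sq_nonneg (β j)]
    -- off-diagonal bound
    have hoff : |∑ j, ∑ k ∈ univ.erase j, β j * β k * (∑ i, X i j * X i k)|
        ≤ mc * M ^ 2 * l1 β ^ 2 := by
      calc |∑ j, ∑ k ∈ univ.erase j, β j * β k * (∑ i, X i j * X i k)|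
          ≤ ∑ j, ∑ k ∈ univ.erase j, |β j| * |β k| * |∑ i, X i j * X i k| := by
            refine (Finset.abs_sum_le_sum_abs _ _).trans (Finset.sum_le_sum fun j _ => ?_)
            refine (Finset.abs_sum_le_sum_abs _ _).trans (Finset.sum_le_sum fun k _ => ?_)
            rw [abs_mul, abs_mul]
        _ ≤ ∑ j, ∑ k ∈ univ.erase j, |β j| * |β k| * (mc * M ^ 2) := by
            refine Finset.sum_le_sum fun j _ => Finset.sum_le_sum fun k hk => ?_
            have hkj : k ≠ j := Finset.ne_of_mem_erase hk
            refine mul_le_mul_of_nonneg_left ?_ (mul_nonneg (abs_nonneg _) (abs_nonneg _))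
            calc |∑ i, X i j * X i k| ≤ mc * (c j * c k) := hmcle j k (Ne.symm hkj)
              _ ≤ mc * M ^ 2 := by
                  apply mul_le_mul_of_nonneg_left _ hmcnn
                  rw [pow_two]
                  exact mul_le_mul (hcM j) (hcM k) (hcols k).le hMpos.le
        _ ≤ ∑ j, ∑ k, |β j| * |β k| * (mc * M ^ 2) := by
            refine Finset.sum_le_sum fun j _ => ?_
            exact Finset.sum_le_sum_of_subset_of_nonneg (Finset.erase_subset _ _)
              (fun k _ _ => by positivity)
        _ = mc * M ^ 2 * l1 β ^ 2 := by
            have hsq : (∑ i, |β i|) ^ 2 = ∑ j, ∑ k, |β j| * |β k| := by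
              rw [pow_two, Finset.sum_mul_sum]
            rw [l1, hsq, Finset.mul_sum]
            refine Finset.sum_congr rfl fun j _ => ?_
            rw [Finset.mul_sum]
            exact Finset.sum_congr rfl fun k _ => by ring
    -- combine
    have hmain : m ^ 2 * l2 β ^ 2 - s * mc * M ^ 2 * l2 β ^ 2 ≤ l2 (X.mulVec β) ^ 2 := by
      rw [hsplit, hl2βsq]
      have h1 : -(mc * M ^ 2 * l1 β ^ 2) ≤ ∑ j, ∑ k ∈ univ.erase j, β j * β k * (∑ i, X i j * X i k) :=
        neg_le_of_abs_le hoff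
      have h2 : mc * M ^ 2 * l1 β ^ 2 ≤ mc * M ^ 2 * ((s : ℝ) * ∑ j, (β j) ^ 2) :=
        mul_le_mul_of_nonneg_left hl1sq (by positivity)
      nlinarith [hdiag]
    -- divide
    rw [div_pow, div_pow, mul_pow]
    rw [sub_le_iff_le_add] at *
    rw [div_add' _ _ _ (by positivity), div_le_div_iff₀ (by positivity) (by positivity)]
    calc m ^ 2 * (M ^ 2 * l2 β ^ 2)
        = (m ^ 2 * l2 β ^ 2) * M ^ 2 := by ring
      _ ≤ (l2 (X.mulVec β) ^ 2 + s * mc * M ^ 2 * l2 β ^ 2) * M ^ 2 := by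
          apply mul_le_mul_of_nonneg_right _ (sq_nonneg M)
          linarith [hmain]
      _ = (l2 (X.mulVec β) ^ 2 + s * mc * (M ^ 2 * l2 β ^ 2)) * M ^ 2 := by ring
  -- wrap up: the infimum
  set S : Set ℝ := {x | ∃ β : Fin p → ℝ, β ≠ 0 ∧ (Function.support β).ncard ≤ s ∧
    x = l2 (X.mulVec β) / (normX X * l2 β)} with hS
  have hSne : S.Nonempty := by
    refine ⟨l2 (X.mulVec (Pi.single i0 1)) / (normX X * l2 (Pi.single i0 1)),
      Pi.single i0 1, ?_, ?_, rfl⟩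
    · intro h
      have := congrFun h i0
      simp [Pi.single_eq_same] at this
    · have : Function.support (Pi.single i0 (1:ℝ)) = {i0} := by
        ext j
        simp [Function.mem_support, Pi.single_apply]
      rw [this, Set.ncard_singleton]
      exact hs
  have hSnn : ∀ x ∈ S, 0 ≤ x := by
    rintro x ⟨β, -, -, rfl⟩
    exact div_nonneg (Real.sqrt_nonneg _) (mul_nonneg hMpos.le (Real.sqrt_nonneg _))
  set L : ℝ := (m / M) ^ 2 - s * mc with hL
  show L ≤ phiTilde X s ^ 2
  by_cases hLpos : L ≤ 0
  · exact hLpos.trans (sq_nonneg _)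
  · push_neg at hLpos
    have hsqrtle : Real.sqrt L ≤ phiTilde X s := by
      rw [phiTilde]
      refine le_csInf hSne ?_
      rintro x ⟨β, hβ, hsupp, rfl⟩
      have hx2 : L ≤ (l2 (X.mulVec β) / (normX X * l2 β)) ^ 2 := key β hβ hsupp
      have hxnn : 0 ≤ l2 (X.mulVec β) / (normX X * l2 β) :=
        div_nonneg (Real.sqrt_nonneg _) (mul_nonneg hMpos.le (Real.sqrt_nonneg _))
      calc Real.sqrt L ≤ Real.sqrt ((l2 (X.mulVec β) / (normX X * l2 β)) ^ 2) :=
            Real.sqrt_le_sqrt hx2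
        _ = l2 (X.mulVec β) / (normX X * l2 β) := Real.sqrt_sq hxnn
    calc L = Real.sqrt L ^ 2 := (Real.sq_sqrt hLpos.le).symm
      _ ≤ phiTilde X s ^ 2 := pow_le_pow_left₀ (Real.sqrt_nonneg _) hsqrtle 2
end

section
/- Let X be an n×p matrix with nonzero columns, mc(X) its mutual coherence, ‖X‖ = max_i ‖X_{·,i}‖_2, and φ̄(1) = min_i ‖X_{·,i}‖_2/‖X‖. For a set S ⊆ {1,...,p} of cardinality |S|, define the compatibility number φ(S) = inf{ ‖Xβ‖_2 |S|^{1/2} / (‖X‖ ‖β_S‖_1) : ‖β_{S^c}‖_1 ≤ 7‖β_S‖_1, β_S ≠ 0 }. Then φ(S)² ≥ φ̄(1)² − 15 |S| · mc(X). -/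
/-- Compatibility number of a model `S`:
`φ(S) = inf{ ‖Xβ‖₂|S|^{1/2}/(‖X‖‖β_S‖₁) : ‖β_{S^c}‖₁ ≤ 7‖β_S‖₁, β_S ≠ 0 }`. -/
noncomputable def compatNum {n p : ℕ} (X : Matrix (Fin n) (Fin p) ℝ)
    (S : Finset (Fin p)) : ℝ :=
  sInf {x | ∃ β : Fin p → ℝ, (∑ i ∈ Sᶜ, |β i|) ≤ 7 * ∑ i ∈ S, |β i| ∧
    (∑ i ∈ S, |β i|) ≠ 0 ∧
    x = l2 (X.mulVec β) * Real.sqrt S.card / (normX X * ∑ i ∈ S, |β i|)}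

/-- Auxiliary: bilinear expansion of sums. -/
lemma bilin_expand {n p : ℕ} (X : Matrix (Fin n) (Fin p) ℝ) (A B : Finset (Fin p))
    (β : Fin p → ℝ) :
    ∑ k, (∑ j ∈ A, X k j * β j) * (∑ j ∈ B, X k j * β j)
      = ∑ j ∈ A, ∑ j' ∈ B, β j * β j' * (∑ k, X k j * X k j') := by
  simp_rw [Finset.sum_mul_sum, Finset.mul_sum]
  rw [Finset.sum_comm]
  refine Finset.sum_congr rfl fun j _ => ?_
  rw [Finset.sum_comm]
  refine Finset.sum_congr rfl fun j' _ => ?_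
  exact Finset.sum_congr rfl fun k _ => by ring

set_option maxHeartbeats 1000000

/-- `φ(S)² ≥ φ̄(1)² − 15|S|·mc(X)` with `φ̄(1) = min_i ‖X_{·,i}‖₂/‖X‖`. -/
theorem compatNum_sq_ge {n p : ℕ} (X : Matrix (Fin n) (Fin p) ℝ)
    (hp : 0 < p) (hcols : ∀ j, 0 < Real.sqrt (∑ k, (X k j) ^ 2))
    (S : Finset (Fin p)) (hS : S.Nonempty) :
    ((⨅ i, Real.sqrt (∑ k, (X k i) ^ 2)) / normX X) ^ 2
        - 15 * S.card * mutualCoherence X ≤ compatNum X S ^ 2 := by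
  haveI : Nonempty (Fin p) := ⟨⟨0, hp⟩⟩
  set mN : Fin p → ℝ := fun j => Real.sqrt (∑ k, (X k j) ^ 2) with hmN
  set N : ℝ := normX X with hNdef
  set M : ℝ := ⨅ i, mN i with hMdef
  set mc : ℝ := mutualCoherence X with hmcdef
  set G : Fin p → Fin p → ℝ := fun i j => ∑ k, X k i * X k j with hGdef
  have hmN2 : ∀ j, mN j ^ 2 = ∑ k, (X k j) ^ 2 := fun j =>
    Real.sq_sqrt (Finset.sum_nonneg fun k _ => sq_nonneg _)
  have hmNpos : ∀ j, 0 < mN j := hcols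
  have hNle : ∀ j, mN j ≤ N := fun j =>
    le_ciSup (Set.Finite.bddAbove (Set.finite_range mN)) j
  have hN : 0 < N := lt_of_lt_of_le (hmNpos (Classical.arbitrary _)) (hNle _)
  have hM0 : 0 ≤ M := Real.iInf_nonneg fun j => (hmNpos j).le
  have hMle : ∀ j, M ≤ mN j := fun j => ciInf_le ⟨0, fun x ⟨i, hi⟩ => hi ▸ (hmNpos i).le⟩ j
  -- Cauchy-Schwarz for columns
  have hCS : ∀ i j, |G i j| ≤ mN i * mN j := by
    intro i j
    have h1 : (∑ k, X k i * X k j) ^ 2 ≤ (∑ k, (X k i) ^ 2) * (∑ k, (X k j) ^ 2) :=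
      Finset.sum_mul_sq_le_sq_mul_sq _ _ _
    have h2 : |G i j| = Real.sqrt ((∑ k, X k i * X k j) ^ 2) := (Real.sqrt_sq_eq_abs _).symm
    rw [h2, hmN]
    rw [← Real.sqrt_mul (Finset.sum_nonneg fun k _ => sq_nonneg _)]
    exact Real.sqrt_le_sqrt h1
  -- mutual coherence basic facts
  have hmcT : ∀ x ∈ {x | ∃ i j : Fin p, i ≠ j ∧
      x = |∑ k, X k i * X k j| /
        (Real.sqrt (∑ k, (X k i) ^ 2) * Real.sqrt (∑ k, (X k j) ^ 2))},
      x ∈ Set.Icc (0:ℝ) 1 := by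
    rintro x ⟨i, j, hij, rfl⟩
    have hpi := hcols i
    have hpj := hcols j
    constructor
    · positivity
    · rw [div_le_one (by positivity)]
      simpa using hCS i j
  have hbdd : BddAbove {x | ∃ i j : Fin p, i ≠ j ∧
      x = |∑ k, X k i * X k j| /
        (Real.sqrt (∑ k, (X k i) ^ 2) * Real.sqrt (∑ k, (X k j) ^ 2))} :=
    ⟨1, fun x hx => (hmcT x hx).2⟩
  have hmc0 : 0 ≤ mc := by
    by_cases hij : ∃ i j : Fin p, i ≠ j
    · obtain ⟨i, j, hij⟩ := hij
      have hmem : (|∑ k, X k i * X k j| /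
          (Real.sqrt (∑ k, (X k i) ^ 2) * Real.sqrt (∑ k, (X k j) ^ 2))) ∈
          {x | ∃ i j : Fin p, i ≠ j ∧
            x = |∑ k, X k i * X k j| /
              (Real.sqrt (∑ k, (X k i) ^ 2) * Real.sqrt (∑ k, (X k j) ^ 2))} :=
        ⟨i, j, hij, rfl⟩
      have hpi := hcols i
      have hpj := hcols j
      exact le_trans (by positivity) (le_csSup hbdd hmem)
    · have hempty : {x | ∃ i j : Fin p, i ≠ j ∧
          x = |∑ k, X k i * X k j| /
            (Real.sqrt (∑ k, (X k i) ^ 2) * Real.sqrt (∑ k, (X k j) ^ 2))} = ∅ := by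
        ext x
        simp only [Set.mem_setOf_eq, Set.mem_empty_iff_false, iff_false]
        rintro ⟨i, j, h, -⟩
        exact hij ⟨i, j, h⟩
      rw [hmcdef, mutualCoherence, hempty, Real.sSup_empty]
  have hGmc : ∀ i j, i ≠ j → |G i j| ≤ mc * (mN i * mN j) := by
    intro i j hij
    have hmem : (|∑ k, X k i * X k j| /
        (Real.sqrt (∑ k, (X k i) ^ 2) * Real.sqrt (∑ k, (X k j) ^ 2))) ∈
        {x | ∃ i j : Fin p, i ≠ j ∧
          x = |∑ k, X k i * X k j| /
            (Real.sqrt (∑ k, (X k i) ^ 2) * Real.sqrt (∑ k, (X k j) ^ 2))} :=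
      ⟨i, j, hij, rfl⟩
    have hle := le_csSup hbdd hmem
    have hpi := hcols i
    have hpj := hcols j
    rw [div_le_iff₀ (by positivity)] at hle
    exact hle
  set W : ℝ := mc * (N * N) with hWdef
  have hW0 : 0 ≤ W := by positivity
  have hkeypt : ∀ β : Fin p → ℝ, ∀ i j, i ≠ j →
      -(|β i| * |β j| * W) ≤ β i * β j * G i j := by
    intro β i j hij
    have hGW : |G i j| ≤ W := by
      refine le_trans (hGmc i j hij) ?_
      have h1 : mN i * mN j ≤ N * N :=
        mul_le_mul (hNle i) (hNle j) (hmNpos j).le hN.le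
      exact mul_le_mul_of_nonneg_left h1 hmc0
    have h1 : |β i * β j * G i j| ≤ |β i| * |β j| * W := by
      rw [abs_mul, abs_mul]
      exact mul_le_mul_of_nonneg_left hGW (by positivity)
    linarith [neg_abs_le (β i * β j * G i j)]
  set sc : ℝ := (S.card : ℝ) with hscdef
  have hsc0 : (0:ℝ) ≤ sc := Nat.cast_nonneg _
  -- the defining set of the compatibility number
  have hTne : {x | ∃ β : Fin p → ℝ, (∑ i ∈ Sᶜ, |β i|) ≤ 7 * ∑ i ∈ S, |β i| ∧
      (∑ i ∈ S, |β i|) ≠ 0 ∧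
      x = l2 (X.mulVec β) * Real.sqrt S.card / (N * ∑ i ∈ S, |β i|)}.Nonempty := by
    obtain ⟨i0, hi0⟩ := hS
    refine ⟨_, fun j => if j = i0 then (1:ℝ) else 0, ?_, ?_, rfl⟩
    · have h1 : ∑ i ∈ Sᶜ, |if i = i0 then (1:ℝ) else 0| = 0 := by
        refine Finset.sum_eq_zero fun i hi => ?_
        have : i ≠ i0 := fun he => (Finset.mem_compl.mp hi) (he ▸ hi0)
        simp [this]
      have h2 : (0:ℝ) ≤ ∑ i ∈ S, |if i = i0 then (1:ℝ) else 0| :=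
        Finset.sum_nonneg fun _ _ => abs_nonneg _
      rw [h1]; linarith
    · have h2 : ∑ i ∈ S, |if i = i0 then (1:ℝ) else 0| = 1 := by
        rw [show (fun i => |if i = i0 then (1:ℝ) else 0|)
            = fun i => if i = i0 then (1:ℝ) else 0 from funext fun i => by
          by_cases h : i = i0 <;> simp [h]]
        simp [Finset.sum_ite_eq' S i0 (fun _ => (1:ℝ)), hi0]
      rw [h2]; exact one_ne_zero
  -- every element of the set satisfies the bound
  have hTprop : ∀ x ∈ {x | ∃ β : Fin p → ℝ, (∑ i ∈ Sᶜ, |β i|) ≤ 7 * ∑ i ∈ S, |β i| ∧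
      (∑ i ∈ S, |β i|) ≠ 0 ∧
      x = l2 (X.mulVec β) * Real.sqrt S.card / (N * ∑ i ∈ S, |β i|)},
      0 ≤ x ∧ (M / N) ^ 2 - 15 * sc * mc ≤ x ^ 2 := by
    rintro x ⟨β, ha, hh0, rfl⟩
    set h : ℝ := ∑ i ∈ S, |β i| with hhdef
    have hhpos : 0 < h :=
      lt_of_le_of_ne (Finset.sum_nonneg fun _ _ => abs_nonneg _) (Ne.symm hh0)
    have hl2 : 0 ≤ l2 (X.mulVec β) := Real.sqrt_nonneg _
    constructor
    · positivity
    set Q : ℝ := ∑ k, (X.mulVec β k) ^ 2 with hQdef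
    have hQ0 : 0 ≤ Q := Finset.sum_nonneg fun _ _ => sq_nonneg _
    have hx2 : (l2 (X.mulVec β) * Real.sqrt S.card / (N * h)) ^ 2
        = Q * sc / (N ^ 2 * h ^ 2) := by
      rw [div_pow, mul_pow, mul_pow]
      congr 1
      · congr 1
        · exact Real.sq_sqrt (Finset.sum_nonneg fun _ _ => sq_nonneg _)
        · exact Real.sq_sqrt (Nat.cast_nonneg _)
    rw [hx2, le_div_iff₀ (by positivity)]
    have hexp : ((M / N) ^ 2 - 15 * sc * mc) * (N ^ 2 * h ^ 2)
        = M ^ 2 * h ^ 2 - 15 * sc * mc * (N ^ 2 * h ^ 2) := by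
      field_simp
    rw [hexp]
    -- decompose Q
    set u : Fin n → ℝ := fun k => ∑ j ∈ S, X k j * β j with hudef
    set v : Fin n → ℝ := fun k => ∑ j ∈ Sᶜ, X k j * β j with hvdef
    have hmv : ∀ k, X.mulVec β k = u k + v k := by
      intro k
      show (∑ j, X k j * β j) = u k + v k
      exact (Finset.sum_add_sum_compl S _).symm
    have hQsplit : Q = (∑ k, u k * u k) + 2 * (∑ k, u k * v k) + ∑ k, v k ^ 2 := by
      calc Q = ∑ k, (u k + v k) ^ 2 := Finset.sum_congr rfl fun k _ => by rw [hmv k]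
        _ = ∑ k, (u k * u k + 2 * (u k * v k) + v k ^ 2) :=
            Finset.sum_congr rfl fun k _ => by ring
        _ = _ := by rw [Finset.sum_add_distrib, Finset.sum_add_distrib, Finset.mul_sum]
    have hAexp : ∑ k, u k * u k = ∑ j ∈ S, ∑ j' ∈ S, β j * β j' * G j j' :=
      bilin_expand X S S β
    have hBexp : ∑ k, u k * v k = ∑ j ∈ S, ∑ j' ∈ Sᶜ, β j * β j' * G j j' :=
      bilin_expand X S Sᶜ β
    have hAsplit : ∑ j ∈ S, ∑ j' ∈ S, β j * β j' * G j j'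
        = (∑ j ∈ S, β j ^ 2 * G j j)
          + ∑ j ∈ S, ∑ j' ∈ S.erase j, β j * β j' * G j j' := by
      rw [← Finset.sum_add_distrib]
      refine Finset.sum_congr rfl fun j hj => ?_
      rw [← Finset.add_sum_erase S (fun j' => β j * β j' * G j j') hj]
      ring_nf
    set σ : ℝ := ∑ j ∈ S, β j ^ 2 with hσdef
    have hD : M ^ 2 * σ ≤ ∑ j ∈ S, β j ^ 2 * G j j := by
      rw [hσdef, Finset.mul_sum]
      refine Finset.sum_le_sum fun j _ => ?_
      have hGd : G j j = mN j ^ 2 := by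
        rw [hmN2]
        exact Finset.sum_congr rfl fun k _ => (sq (X k j)).symm
      rw [hGd]
      have h1 : M ^ 2 ≤ mN j ^ 2 := pow_le_pow_left₀ hM0 (hMle j) 2
      nlinarith [sq_nonneg (β j)]
    have hinner : ∀ j, ∀ B : Finset (Fin p), (∀ j' ∈ B, j ≠ j') →
        -(W * |β j| * ∑ j' ∈ B, |β j'|) ≤ ∑ j' ∈ B, β j * β j' * G j j' := by
      intro j B hB
      calc -(W * |β j| * ∑ j' ∈ B, |β j'|)
          = ∑ j' ∈ B, -(|β j| * |β j'| * W) := by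
            rw [Finset.mul_sum, Finset.sum_neg_distrib]
            congr 1
            exact Finset.sum_congr rfl fun j' _ => by ring
        _ ≤ ∑ j' ∈ B, β j * β j' * G j j' :=
            Finset.sum_le_sum fun j' hj' => hkeypt β j j' (hB j' hj')
    have hE : -(W * h * h) ≤ ∑ j ∈ S, ∑ j' ∈ S.erase j, β j * β j' * G j j' := by
      have step : ∀ j ∈ S, -(W * |β j| * h) ≤ ∑ j' ∈ S.erase j, β j * β j' * G j j' := by
        intro j hj
        refine le_trans ?_ (hinner j (S.erase j) fun j' hj' =>
          (Finset.ne_of_mem_erase hj').symm)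
        have hsub : ∑ j' ∈ S.erase j, |β j'| ≤ h :=
          Finset.sum_le_sum_of_subset_of_nonneg (Finset.erase_subset _ _)
            fun _ _ _ => abs_nonneg _
        have : W * |β j| * (∑ j' ∈ S.erase j, |β j'|) ≤ W * |β j| * h :=
          mul_le_mul_of_nonneg_left hsub (by positivity)
        linarith
      calc -(W * h * h) = ∑ j ∈ S, -(W * |β j| * h) := by
            rw [Finset.sum_neg_distrib]
            congr 1
            rw [← Finset.sum_mul, ← Finset.mul_sum]
        _ ≤ _ := Finset.sum_le_sum step
    have hBb : -(W * h * (7 * h)) ≤ ∑ j ∈ S, ∑ j' ∈ Sᶜ, β j * β j' * G j j' := by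
      have step : ∀ j ∈ S, -(W * |β j| * (7 * h)) ≤ ∑ j' ∈ Sᶜ, β j * β j' * G j j' := by
        intro j hj
        refine le_trans ?_ (hinner j Sᶜ fun j' hj' => fun he =>
          (Finset.mem_compl.mp hj') (he ▸ hj))
        have : W * |β j| * (∑ j' ∈ Sᶜ, |β j'|) ≤ W * |β j| * (7 * h) :=
          mul_le_mul_of_nonneg_left ha (by positivity)
        linarith
      calc -(W * h * (7 * h)) = ∑ j ∈ S, -(W * |β j| * (7 * h)) := by
            rw [Finset.sum_neg_distrib]
            congr 1
            rw [← Finset.sum_mul, ← Finset.mul_sum]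
        _ ≤ _ := Finset.sum_le_sum step
    have hCv : (0:ℝ) ≤ ∑ k, v k ^ 2 := Finset.sum_nonneg fun _ _ => sq_nonneg _
    have hCheb : h ^ 2 ≤ sc * σ := by
      have h1 : (∑ j ∈ S, |β j|) ^ 2 ≤ (S.card : ℝ) * ∑ j ∈ S, |β j| ^ 2 :=
        sq_sum_le_card_mul_sum_sq
      have h2 : ∑ j ∈ S, |β j| ^ 2 = σ := Finset.sum_congr rfl fun j _ => sq_abs _
      rw [h2] at h1
      exact h1
    -- combine everything
    have hQge : M ^ 2 * σ - 15 * (W * h ^ 2) ≤ Q := by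
      rw [hQsplit, hAexp, hBexp, hAsplit]
      have e1 : W * h * h = W * h ^ 2 := by ring
      have e2 : W * h * (7 * h) = 7 * (W * h ^ 2) := by ring
      linarith [hD, hE, hBb, hCv]
    have h1 : (M ^ 2 * σ - 15 * (W * h ^ 2)) * sc ≤ Q * sc :=
      mul_le_mul_of_nonneg_right hQge hsc0
    have h2 : M ^ 2 * h ^ 2 ≤ M ^ 2 * (sc * σ) :=
      mul_le_mul_of_nonneg_left hCheb (sq_nonneg M)
    have h3 : 15 * (W * h ^ 2) * sc = 15 * sc * mc * (N ^ 2 * h ^ 2) := by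
      rw [hWdef]; ring
    linarith [h1, h2, h3]
  -- conclude
  have hgoal : (M / N) ^ 2 - 15 * sc * mc ≤ compatNum X S ^ 2 := by
    rcases le_or_gt ((M / N) ^ 2 - 15 * sc * mc) 0 with hC | hC
    · exact le_trans hC (sq_nonneg _)
    · have hsqrt : Real.sqrt ((M / N) ^ 2 - 15 * sc * mc) ≤ compatNum X S := by
        rw [compatNum]
        refine le_csInf hTne ?_
        intro x hx
        obtain ⟨hx0, hx2⟩ := hTprop x hx
        calc Real.sqrt ((M / N) ^ 2 - 15 * sc * mc) ≤ Real.sqrt (x ^ 2) :=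
              Real.sqrt_le_sqrt hx2
          _ = x := by rw [Real.sqrt_sq hx0]
      calc (M / N) ^ 2 - 15 * sc * mc
          = Real.sqrt ((M / N) ^ 2 - 15 * sc * mc) ^ 2 := (Real.sq_sqrt hC.le).symm
        _ ≤ compatNum X S ^ 2 :=
            pow_le_pow_left₀ (Real.sqrt_nonneg _) hsqrt 2
  exact hgoal
end

section
/- Let X be an n×p matrix with mutual coherence mc(X) and scaled sparse singular value φ̃(s) > 0 (so that λ_min(Γ_S) ≥ φ̃(s)²‖X‖² for every |S| = s), and let j ∉ S with |S| = s. Then ‖P_S X_{·,j}‖_2² ≤ s · mc(X)² · ‖X‖² / φ̃(s)², where P_S is the orthogonal projection onto the span of the columns {X_{·,i} : i ∈ S} and all columns of X have length at most ‖X‖ and at least φ̃(1)‖X‖. -/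
open Matrix

/-- The Gram matrix `Γ_S = X_S^t X_S` of the submatrix of `X` with columns in `S`. -/
noncomputable def gram {n p : ℕ} (X : Matrix (Fin n) (Fin p) ℝ)
    (S : Finset (Fin p)) : Matrix S S ℝ :=
  (X.submatrix (id : Fin n → Fin n) (Subtype.val : S → Fin p)).transpose *
    X.submatrix (id : Fin n → Fin n) (Subtype.val : S → Fin p)

/-- The submatrix `X_S` of `X` with columns in `S`. -/
noncomputable def subX {n p : ℕ} (X : Matrix (Fin n) (Fin p) ℝ)
    (S : Finset (Fin p)) : Matrix (Fin n) S ℝ :=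
  X.submatrix (id : Fin n → Fin n) (Subtype.val : S → Fin p)


lemma aux_normX_nonneg {n p : ℕ} (X : Matrix (Fin n) (Fin p) ℝ) : 0 ≤ normX X :=
  Real.iSup_nonneg fun _ => Real.sqrt_nonneg _

lemma aux_col_le_normX {n p : ℕ} (X : Matrix (Fin n) (Fin p) ℝ) (k : Fin p) :
    Real.sqrt (∑ i, (X i k) ^ 2) ≤ normX X := by
  unfold normX
  exact le_ciSup (f := fun j : Fin p => Real.sqrt (∑ i, (X i j) ^ 2))
    (Set.Finite.bddAbove (Set.finite_range _)) k

lemma aux_quad_id {n : ℕ} {m : Type*} [Fintype m] (A : Matrix (Fin n) m ℝ) (u : m → ℝ) :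
    u ⬝ᵥ (Aᵀ * A).mulVec u = ∑ i, (A.mulVec u i) ^ 2 := by
  rw [← Matrix.mulVec_mulVec, Matrix.dotProduct_mulVec, Matrix.vecMul_transpose]
  simp [dotProduct, sq]

lemma aux_quad_lower {n p : ℕ} (X : Matrix (Fin n) (Fin p) ℝ)
    (hXpos : 0 < normX X) (S : Finset (Fin p)) (s : ℕ) (hs : S.card = s)
    (hphi : 0 < phiTilde X s) (u : S → ℝ) :
    phiTilde X s ^ 2 * normX X ^ 2 * (∑ i, u i ^ 2) ≤ u ⬝ᵥ (gram X S).mulVec u := by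
  classical
  have hgram : gram X S = (subX X S)ᵀ * subX X S := rfl
  rw [hgram, aux_quad_id]
  rcases eq_or_ne u 0 with rfl | hu
  · simp
  · set β : Fin p → ℝ := fun k => if h : k ∈ S then u ⟨k, h⟩ else 0 with hβ
    obtain ⟨i0, hi0⟩ : ∃ i, u i ≠ 0 := Function.ne_iff.mp hu
    have hβ0 : β ≠ 0 := by
      intro h
      apply hi0
      have := congrFun h i0.val
      simpa [hβ, i0.2] using this
    have hsupp : Function.support β ⊆ (S : Set (Fin p)) := by
      intro k hk
      by_contra hkS
      exact hk (by simp only [hβ]; exact dif_neg (by simpa using hkS))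
    have hncard : (Function.support β).ncard ≤ s := by
      calc (Function.support β).ncard ≤ (S : Set (Fin p)).ncard :=
            Set.ncard_le_ncard hsupp S.finite_toSet
        _ = s := by rw [Set.ncard_coe_finset, hs]
    have hmv : X.mulVec β = (subX X S).mulVec u := by
      funext i
      simp only [Matrix.mulVec, dotProduct, subX, Matrix.submatrix_apply, id]
      rw [← Finset.sum_subset (Finset.subset_univ S)
        (by intro k _ hk; simp [hβ, hk])]
      rw [← Finset.sum_coe_sort S (fun k => X i k * β k)]
      refine Finset.sum_congr rfl fun k _ => ?_
      simp [hβ, k.2]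
    have hsum : ∑ k, β k ^ 2 = ∑ i, u i ^ 2 := by
      rw [← Finset.sum_subset (Finset.subset_univ S)
        (by intro k _ hk; simp [hβ, hk])]
      rw [← Finset.sum_coe_sort S (fun k => β k ^ 2)]
      refine Finset.sum_congr rfl fun k _ => ?_
      simp [hβ, k.2]
    have hl2 : l2 β = Real.sqrt (∑ i, u i ^ 2) := by rw [l2, hsum]
    have hupos : 0 < ∑ i, u i ^ 2 := by
      refine Finset.sum_pos' (fun i _ => sq_nonneg _) ⟨i0, Finset.mem_univ _, ?_⟩
      positivity
    have hl2pos : 0 < l2 β := by rw [hl2]; exact Real.sqrt_pos.mpr hupos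
    have hle : phiTilde X s ≤ l2 (X.mulVec β) / (normX X * l2 β) := by
      apply csInf_le
      · refine ⟨0, fun x hx => ?_⟩
        obtain ⟨γ, _, _, rfl⟩ := hx
        exact div_nonneg (Real.sqrt_nonneg _)
          (mul_nonneg (aux_normX_nonneg X) (Real.sqrt_nonneg _))
      · exact ⟨β, hβ0, hncard, rfl⟩
    have hdenom : 0 < normX X * l2 β := mul_pos hXpos hl2pos
    have h2 : phiTilde X s * (normX X * l2 β) ≤ l2 (X.mulVec β) := by
      rw [← le_div_iff₀ hdenom]; exact hle
    have hXβ : ∑ i, ((subX X S).mulVec u i) ^ 2 = (l2 (X.mulVec β)) ^ 2 := by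
      rw [l2, Real.sq_sqrt (Finset.sum_nonneg fun _ _ => sq_nonneg _), hmv]
    rw [hXβ]
    calc phiTilde X s ^ 2 * normX X ^ 2 * ∑ i, u i ^ 2
        = (phiTilde X s * (normX X * l2 β)) ^ 2 := by
          rw [hl2, mul_pow, mul_pow, Real.sq_sqrt hupos.le]; ring
      _ ≤ (l2 (X.mulVec β)) ^ 2 :=
          pow_le_pow_left₀ (mul_nonneg hphi.le hdenom.le) h2 2

lemma aux_inv_quad {m : Type*} [Fintype m] [DecidableEq m] (G : Matrix m m ℝ)
    (hpd : G.PosDef) (c : ℝ) (hc : 0 < c)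
    (hq : ∀ u : m → ℝ, c * (∑ i, u i ^ 2) ≤ u ⬝ᵥ G.mulVec u)
    (w : m → ℝ) : w ⬝ᵥ G⁻¹.mulVec w ≤ (∑ i, w i ^ 2) / c := by
  set u : m → ℝ := G⁻¹.mulVec w with hu
  have hGu : G.mulVec u = w := by
    rw [hu, Matrix.mulVec_mulVec, Matrix.mul_nonsing_inv _ hpd.det_pos.ne'.isUnit,
      Matrix.one_mulVec]
  have h1 : w ⬝ᵥ G⁻¹.mulVec w = u ⬝ᵥ G.mulVec u := by
    rw [← hu, hGu, dotProduct_comm]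
  rw [h1, le_div_iff₀ hc]
  set q : ℝ := u ⬝ᵥ G.mulVec u with hqdef
  have hq2 : q = ∑ i, u i * w i := by rw [hqdef, hGu]; rfl
  have hcs : q ^ 2 ≤ (∑ i, u i ^ 2) * (∑ i, w i ^ 2) := by
    rw [hq2]; exact Finset.sum_mul_sq_le_sq_mul_sq _ _ _
  have hlow := hq u
  rw [← hqdef] at hlow
  have hA : (0:ℝ) ≤ ∑ i, u i ^ 2 := Finset.sum_nonneg fun _ _ => sq_nonneg _
  have hB : (0:ℝ) ≤ ∑ i, w i ^ 2 := Finset.sum_nonneg fun _ _ => sq_nonneg _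
  have hq0 : 0 ≤ q := le_trans (mul_nonneg hc.le hA) hlow
  rcases hq0.eq_or_lt with h | h
  · rw [← h]; simpa using hB
  · have h2 : (c * q) * q ≤ (∑ i, w i ^ 2) * q := by
      nlinarith [mul_le_mul_of_nonneg_left hcs hc.le, mul_le_mul_of_nonneg_right hlow hB]
    have h3 : c * q ≤ ∑ i, w i ^ 2 := le_of_mul_le_mul_right h2 h
    linarith

lemma aux_mc_bound {n p : ℕ} (X : Matrix (Fin n) (Fin p) ℝ)
    (hcols : ∀ k, 0 < Real.sqrt (∑ i, (X i k) ^ 2))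
    {i j : Fin p} (hij : i ≠ j) :
    |∑ k, X k i * X k j| ≤ mutualCoherence X * normX X ^ 2 := by
  have hni := hcols i
  have hnj := hcols j
  have hbdd : BddAbove {x | ∃ i j : Fin p, i ≠ j ∧
      x = |∑ k, X k i * X k j| /
        (Real.sqrt (∑ k, (X k i) ^ 2) * Real.sqrt (∑ k, (X k j) ^ 2))} := by
    refine ⟨1, fun x hx => ?_⟩
    obtain ⟨a, b, hab, rfl⟩ := hx
    rw [div_le_one (mul_pos (hcols a) (hcols b))]
    calc |∑ k, X k a * X k b| = Real.sqrt ((∑ k, X k a * X k b) ^ 2) :=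
          (Real.sqrt_sq_eq_abs _).symm
      _ ≤ Real.sqrt ((∑ k, (X k a) ^ 2) * ∑ k, (X k b) ^ 2) :=
          Real.sqrt_le_sqrt (Finset.sum_mul_sq_le_sq_mul_sq _ _ _)
      _ = _ := Real.sqrt_mul (Finset.sum_nonneg fun _ _ => sq_nonneg _) _
  have hr : |∑ k, X k i * X k j| /
      (Real.sqrt (∑ k, (X k i) ^ 2) * Real.sqrt (∑ k, (X k j) ^ 2)) ≤ mutualCoherence X :=
    le_csSup hbdd ⟨i, j, hij, rfl⟩
  have hmc0 : 0 ≤ mutualCoherence X :=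
    le_trans (div_nonneg (abs_nonneg _) (mul_pos hni hnj).le) hr
  rw [div_le_iff₀ (mul_pos hni hnj)] at hr
  calc |∑ k, X k i * X k j|
      ≤ mutualCoherence X * (Real.sqrt (∑ k, (X k i) ^ 2) * Real.sqrt (∑ k, (X k j) ^ 2)) := hr
    _ ≤ mutualCoherence X * (normX X * normX X) :=
        mul_le_mul_of_nonneg_left
          (mul_le_mul (aux_col_le_normX X i) (aux_col_le_normX X j) hnj.le (aux_normX_nonneg X))
          hmc0
    _ = mutualCoherence X * normX X ^ 2 := by ring

/-- for `j ∉ S` and `|S| = s`,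
`‖P_S X_{·,j}‖₂² ≤ s · mc(X)² · ‖X‖² / φ̃(s)²`, where `P_S = X_S Γ_S⁻¹ X_S^t`. -/
theorem proj_col_norm_sq_le {n p : ℕ} (X : Matrix (Fin n) (Fin p) ℝ)
    (hcols : ∀ k, 0 < Real.sqrt (∑ i, (X i k) ^ 2))
    (S : Finset (Fin p)) (s : ℕ) (hs : S.card = s)
    (j : Fin p) (hj : j ∉ S)
    (hpd : (gram X S).PosDef) (hphi : 0 < phiTilde X s) :
    ∑ i, ((subX X S * (gram X S)⁻¹ * (subX X S).transpose).mulVec (fun i => X i j) i) ^ 2 ≤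
      s * mutualCoherence X ^ 2 * normX X ^ 2 / phiTilde X s ^ 2 := by
  classical
  have hXpos : 0 < normX X := lt_of_lt_of_le (hcols j) (aux_col_le_normX X j)
  set A := subX X S with hA
  set G := gram X S with hG
  set x : Fin n → ℝ := fun i => X i j with hx
  set v : S → ℝ := Aᵀ.mulVec x with hv
  have hdet : IsUnit G.det := hpd.det_pos.ne'.isUnit
  have hgram : G = Aᵀ * A := rfl
  have hLHS : ∑ i, ((A * G⁻¹ * Aᵀ).mulVec x i) ^ 2 = v ⬝ᵥ G⁻¹.mulVec v := by
    have h1 : (A * G⁻¹ * Aᵀ).mulVec x = A.mulVec (G⁻¹.mulVec v) := by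
      rw [hv, ← Matrix.mulVec_mulVec, ← Matrix.mulVec_mulVec]
    have h2 : G.mulVec (G⁻¹.mulVec v) = v := by
      rw [Matrix.mulVec_mulVec, Matrix.mul_nonsing_inv _ hdet, Matrix.one_mulVec]
    rw [h1, ← aux_quad_id A (G⁻¹.mulVec v), ← hgram, h2, dotProduct_comm]
  rw [hLHS]
  have hc : 0 < phiTilde X s ^ 2 * normX X ^ 2 := by positivity
  have hinv := aux_inv_quad G hpd _ hc
    (fun u => aux_quad_lower X hXpos S s hs hphi u) v
  have hvbound : ∑ i, v i ^ 2 ≤ (s : ℝ) * (mutualCoherence X * normX X ^ 2) ^ 2 := by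
    have hvi : ∀ i : S, v i ^ 2 ≤ (mutualCoherence X * normX X ^ 2) ^ 2 := by
      intro i
      have hval : v i = ∑ k, X k i.val * X k j := by
        simp [hv, hA, Matrix.mulVec, dotProduct, subX, Matrix.transpose_apply, hx]
      have hne : (i : Fin p) ≠ j := fun h => hj (h ▸ i.2)
      rw [← sq_abs, hval]
      exact pow_le_pow_left₀ (abs_nonneg _) (aux_mc_bound X hcols hne) 2
    calc ∑ i, v i ^ 2
        ≤ Finset.univ.card • ((mutualCoherence X * normX X ^ 2) ^ 2) :=
          Finset.sum_le_card_nsmul _ _ _ (fun i _ => hvi i)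
      _ = (s : ℝ) * (mutualCoherence X * normX X ^ 2) ^ 2 := by
          rw [Finset.card_univ, Fintype.card_coe, hs, nsmul_eq_mul]
  have heq : (s : ℝ) * (mutualCoherence X * normX X ^ 2) ^ 2 /
      (phiTilde X s ^ 2 * normX X ^ 2) =
      s * mutualCoherence X ^ 2 * normX X ^ 2 / phiTilde X s ^ 2 := by
    field_simp
  calc v ⬝ᵥ G⁻¹.mulVec v ≤ (∑ i, v i ^ 2) / (phiTilde X s ^ 2 * normX X ^ 2) := hinv
    _ ≤ (s : ℝ) * (mutualCoherence X * normX X ^ 2) ^ 2 /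
        (phiTilde X s ^ 2 * normX X ^ 2) := by gcongr
    _ = _ := heq
end
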